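/- A policy π solves a Dual FOND problem P' if and only if π solves the FOND+ problem ⟨P, {A/∅}⟩, where P is P' with the fair/adversarial action labels removed and A is the set of actions labeled fair in P' (with the B-part of the constraint empty). -/

import Mathlib

namespace FondPaper

/-- A FOND model: initial state, goal states, and transition function
`F a s` giving the set of possible successor states of action `a` in state `s`. -/
structure FOND (S A : Type) where
  init : S
  goal : Set S
  F : A → S → Set S

variable {S A V : Type}

/-- Action `a` is applicable in `s` iff it has some successor. -/
def FOND.Applicable (P : FOND S A) (a : A) (s : S) : Prop := (P.F a s).Nonempty

/-- A policy is a partial function mapping non-goal states into actions. -/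
def IsPolicy (P : FOND S A) (π : S → Option A) : Prop := ∀ s ∈ P.goal, π s = none

/-- A (finite or infinite) trajectory: `len = some n` means the trajectory is
`states 0, …, states n`; `len = none` means it is infinite. -/
structure Traj (S : Type) where
  states : ℕ → S
  len : Option ℕ

/-- Index `i` is within the trajectory. -/
def Traj.Inside (τ : Traj S) (i : ℕ) : Prop := ∀ n, τ.len = some n → i ≤ n

/-- There is a step from index `i` to `i+1` in the trajectory. -/
def Traj.HasStep (τ : Traj S) (i : ℕ) : Prop := ∀ n, τ.len = some n → i < n

/-- `τ` is a π-trajectory of `P`. -/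
def IsTraj (P : FOND S A) (π : S → Option A) (τ : Traj S) : Prop :=
  τ.states 0 = P.init ∧
  ∀ i, τ.HasStep i → ∃ a, π (τ.states i) = some a ∧ τ.states (i + 1) ∈ P.F a (τ.states i)

/-- Maximal trajectory: infinite, or finite ending in the first goal state,
or in a state where the policy is undefined or prescribes an inapplicable action. -/
def MaximalTraj (P : FOND S A) (π : S → Option A) (τ : Traj S) : Prop :=
  τ.len = none ∨
  ∃ n, τ.len = some n ∧
    ((τ.states n ∈ P.goal ∧ ∀ i < n, τ.states i ∉ P.goal) ∨
     π (τ.states n) = none ∨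
     (∃ a, π (τ.states n) = some a ∧ ¬ P.Applicable a (τ.states n)))

/-- The trajectory reaches a goal state. -/
def ReachesGoal (P : FOND S A) (τ : Traj S) : Prop :=
  ∃ i, τ.Inside i ∧ τ.states i ∈ P.goal

/-- `s` is recurrent in `τ`: the trajectory is infinite and `s` occurs infinitely often. -/
def RecurrentIn (τ : Traj S) (s : S) : Prop :=
  τ.len = none ∧ {i | τ.states i = s}.Infinite

/-- One policy step: `s'` is a possible successor of `s` under the policy. -/
def PStep (P : FOND S A) (π : S → Option A) (s s' : S) : Prop :=
  ∃ a, π s = some a ∧ s' ∈ P.F a s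

/-- The policy reaches `s'` from `s`. -/
def ReachesFrom (P : FOND S A) (π : S → Option A) : S → S → Prop :=
  Relation.ReflTransGen (PStep P π)

/-- `s` is reached by the policy: some finite π-trajectory ends at `s`. -/
def ReachedBy (P : FOND S A) (π : S → Option A) (s : S) : Prop :=
  ∃ τ : Traj S, IsTraj P π τ ∧ ∃ n, τ.len = some n ∧ τ.states n = s

/-- Strong-cyclic solution: a goal is reachable via π from every state reached by π. -/
def StrongCyclic (P : FOND S A) (π : S → Option A) : Prop :=
  ∀ s, ReachedBy P π s → ∃ g ∈ P.goal, ReachesFrom P π s g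

/-- Strong solution: every maximal π-trajectory reaches a goal state. -/
def Strong (P : FOND S A) (π : S → Option A) : Prop :=
  ∀ τ : Traj S, IsTraj P π τ → MaximalTraj P π τ → ReachesGoal P τ

/-- Fairness when all actions are fair: each recurrent state is immediately
followed by each of its possible successors infinitely often.
(Finite trajectories have no recurrent states, hence are fair.) -/
def FairAll (P : FOND S A) (π : S → Option A) (τ : Traj S) : Prop :=
  ∀ s, RecurrentIn τ s → ∀ a, π s = some a → ∀ s' ∈ P.F a s,
    {i | τ.states i = s ∧ τ.states (i + 1) = s'}.Infinite

/-- The policy is acyclic: no π-trajectory visits the same state more than once. -/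
def AcyclicPolicy (P : FOND S A) (π : S → Option A) : Prop :=
  ∀ τ : Traj S, IsTraj P π τ → ∀ i j, τ.Inside i → τ.Inside j →
    τ.states i = τ.states j → i = j

/-- The non-deterministic actions of `P`: those with at least two possible
successors in some state. -/
def NonDetActs (P : FOND S A) : Set A :=
  {a | ∃ s s₁ s₂, s₁ ∈ P.F a s ∧ s₂ ∈ P.F a s ∧ s₁ ≠ s₂}

/-- The occurrence of the action `π s` at recurrent state `s` of trajectory `τ`
is fair: for some constraint `(A, B) ∈ C`, `π s ∈ A` and actions from `B`
occur only finitely often along `τ`. -/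
def FairOcc (C : Set (Set A × Set A)) (π : S → Option A) (τ : Traj S) (s : S) : Prop :=
  ∃ c ∈ C, (∃ a, π s = some a ∧ a ∈ c.1) ∧
    ∀ b ∈ c.2, {i | π (τ.states i) = some b}.Finite

/-- `τ` is fair for the FOND+ problem `⟨P, C⟩`. -/
def FairPlus (P : FOND S A) (C : Set (Set A × Set A)) (π : S → Option A) (τ : Traj S) : Prop :=
  ∀ s, RecurrentIn τ s → FairOcc C π τ s → ∀ a, π s = some a → ∀ s' ∈ P.F a s,
    {i | τ.states i = s ∧ τ.states (i + 1) = s'}.Infinite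

/-- `π` solves the FOND+ problem `⟨P, C⟩`. -/
def SolvesPlus (P : FOND S A) (C : Set (Set A × Set A)) (π : S → Option A) : Prop :=
  ∀ τ : Traj S, IsTraj P π τ → MaximalTraj P π τ → FairPlus P C π τ → ReachesGoal P τ

/-- Well-formed set of fairness constraints: finite, each `A`-part a set of
non-deterministic actions and each `B`-part disjoint from the `A`-part. -/
def WellFormedC (P : FOND S A) (C : Set (Set A × Set A)) : Prop :=
  C.Finite ∧ ∀ c ∈ C, c.1 ⊆ NonDetActs P ∧ Disjoint c.1 c.2

/-- A cycle on `s` w.r.t. policy `π`: a sequence `s = t 0, …, t k = s` with `k ≥ 1`,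
each `t i` (`i < k`) non-goal with `π` defined and `t (i+1)` a possible successor. -/
def CycleOn (P : FOND S A) (π : S → Option A) (s : S) (t : ℕ → S) (k : ℕ) : Prop :=
  1 ≤ k ∧ t 0 = s ∧ t k = s ∧
    ∀ i < k, t i ∉ P.goal ∧ ∃ a, π (t i) = some a ∧ t (i + 1) ∈ P.F a (t i)

/-- `s` is fair-for-`T`: for some `(A, B) ∈ C`, `π s ∈ A` and every cycle on `s`
containing a state where `π` prescribes a `B`-action also contains a state in `T`. -/
def FairFor (P : FOND S A) (C : Set (Set A × Set A)) (π : S → Option A)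
    (T : Set S) (s : S) : Prop :=
  ∃ c ∈ C, (∃ a, π s = some a ∧ a ∈ c.1) ∧
    ∀ t k, CycleOn P π s t k →
      (∃ i ≤ k, ∃ b, π (t i) = some b ∧ b ∈ c.2) → ∃ j ≤ k, t j ∈ T

/-- `T` is closed under the FOND+ termination rules. -/
def TermClosed (P : FOND S A) (C : Set (Set A × Set A)) (π : S → Option A) (T : Set S) : Prop :=
  P.goal ⊆ T ∧
  (∀ s a, π s = some a → FairFor P C π T s → (∃ s' ∈ P.F a s, s' ∈ T) → s ∈ T) ∧
  (∀ s a, π s = some a → ¬ FairFor P C π T s → (P.F a s).Nonempty →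
    (∀ s' ∈ P.F a s, s' ∈ T) → s ∈ T)

/-- `s` is terminating for `π` in `⟨P, C⟩`: it belongs to the least set closed
under the FOND+ termination rules. -/
def Terminating (P : FOND S A) (C : Set (Set A × Set A)) (π : S → Option A) (s : S) : Prop :=
  ∀ T : Set S, TermClosed P C π T → s ∈ T

/-- The operator `Φ` of the FOND+ termination computation. -/
def Phi (P : FOND S A) (C : Set (Set A × Set A)) (π : S → Option A) (T : Set S) : Set S :=
  P.goal ∪
  {s | ∃ a, π s = some a ∧ FairFor P C π T s ∧ ∃ s' ∈ P.F a s, s' ∈ T} ∪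
  {s | ∃ a, π s = some a ∧ (P.F a s).Nonempty ∧ P.F a s ⊆ T}

/-- The policy graph of `P` and `π`: edges `(s, s')` for non-goal reachable `s`
with `π s` defined and `s'` a possible successor. -/
def PolicyEdges (P : FOND S A) (π : S → Option A) : Set (S × S) :=
  {e | ReachesFrom P π P.init e.1 ∧ e.1 ∉ P.goal ∧ PStep P π e.1 e.2}

/-- Path (of length ≥ 0) in a graph given by its edge set. -/
def GPath (G : Set (S × S)) : S → S → Prop :=
  Relation.ReflTransGen (fun x y => (x, y) ∈ G)

/-- Edge `e = (s, s')` of `G` is removable by Sieve: `π s` decrements some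
variable `x` not incremented at any state lying on a path in `G` from `s'` back to `s`. -/
def Removable (π : S → Option A) (decs incs : A → Set V) (G : Set (S × S)) (e : S × S) : Prop :=
  e ∈ G ∧ ∃ x : V, (∃ a, π e.1 = some a ∧ x ∈ decs a) ∧
    ∀ w, GPath G e.2 w → GPath G w e.1 → ∀ a, π w = some a → x ∉ incs a

/-- One Sieve edge-removal step. -/
def SieveStep (π : S → Option A) (decs incs : A → Set V) (G G' : Set (S × S)) : Prop :=
  ∃ e, Removable π decs incs G e ∧ G' = G \ {e}

/-- Graph acyclicity: no nonempty path from a state back to itself. -/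
def GAcyclic (G : Set (S × S)) : Prop :=
  ∀ s s', (s, s') ∈ G → ¬ GPath G s' s

/-- A cycle on `s` in a graph given by its edge set. -/
def ECycleOn (E : Set (S × S)) (s : S) (t : ℕ → S) (k : ℕ) : Prop :=
  1 ≤ k ∧ t 0 = s ∧ t k = s ∧ ∀ i < k, (t i, t (i + 1)) ∈ E

/-- `T` is closed under the QNP termination rules. -/
def QNPClosed (P : FOND S A) (π : S → Option A) (decs incs : A → Set V) (T : Set S) : Prop :=
  ∀ s, ReachesFrom P π P.init s →
    ((¬ ∃ t k, ECycleOn (PolicyEdges P π) s t k) ∨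
     (∀ t k, ECycleOn (PolicyEdges P π) s t k → ∃ j ≤ k, t j ∈ T) ∨
     (∃ x, (∃ a, π s = some a ∧ x ∈ decs a) ∧
        ∀ t k, ECycleOn (PolicyEdges P π) s t k →
          (∃ i ≤ k, ∃ a, π (t i) = some a ∧ x ∈ incs a) → ∃ j ≤ k, t j ∈ T)) →
    s ∈ T

/-- `s` is QNP-terminating: it belongs to the least set closed under the QNP
termination rules. -/
def QNPTerm (P : FOND S A) (π : S → Option A) (decs incs : A → Set V) (s : S) : Prop :=
  ∀ T : Set S, QNPClosed P π decs incs T → s ∈ T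

/-- `T` is closed under the Dual-FOND termination rules. -/
def DualClosed (P : FOND S A) (fair : A → Prop) (π : S → Option A) (T : Set S) : Prop :=
  P.goal ⊆ T ∧
  (∀ s a, π s = some a → fair a → (∃ s' ∈ P.F a s, s' ∈ T) → s ∈ T) ∧
  (∀ s a, π s = some a → ¬ fair a → (P.F a s).Nonempty →
    (∀ s' ∈ P.F a s, s' ∈ T) → s ∈ T)

/-- `s` is Dual-FOND terminating. -/
def DualTerm (P : FOND S A) (fair : A → Prop) (π : S → Option A) (s : S) : Prop :=
  ∀ T : Set S, DualClosed P fair π T → s ∈ T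

/-- `π` solves the Dual FOND problem `(P, fair)`. -/
def SolvesDual [Fintype S] (P : FOND S A) (fair : A → Prop) (π : S → Option A) : Prop :=
  (∀ s, ReachedBy P π s → s ∉ P.goal → ∃ a, π s = some a ∧ (P.F a s).Nonempty) ∧
  ∃ d : S → ℕ,
    (∀ s, ReachedBy P π s → d s ≤ Fintype.card S) ∧
    (∀ s, ReachedBy P π s → s ∈ P.goal → d s = 0) ∧
    (∀ s a, ReachedBy P π s → π s = some a →
      (fair a → ∃ s' ∈ P.F a s, d s' < d s) ∧
      (¬ fair a → ∀ s' ∈ P.F a s, d s' < d s))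

end FondPaper

/-!
A ranking `d` that drops along some successor of every fair action and along all successors of
every adversarial one rules out fair infinite trajectories: a recurrent state of minimal rank is
followed infinitely often by some state of smaller rank, which is then recurrent too.

Conversely, let `T` be the least set closed under the Dual-FOND termination rules, built in stages.
Outside `T`, every successor of a fair action and some successor of an adversarial one stay outside
`T`, so from a reached state outside `T` one can run forever outside `T`, cycling round-robin
through all successors of fair actions. That run is fair and never meets a goal, hence every
reached state lies in `T`; it is ranked by the number of states entering `T` at earlier stages,
which is at most `|S|`.
-/

theorem Set.Countable.exists_seq_infinite_fibers {α : Type*} {s : Set α} (hs : s.Countable)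
    (hne : s.Nonempty) : ∃ e : ℕ → α, (∀ k, e k ∈ s) ∧ ∀ a ∈ s, {k | e k = a}.Infinite := by
  obtain ⟨f, rfl⟩ := hs.exists_eq_range hne
  refine ⟨fun k => f k.unpair.1, fun k => ⟨_, rfl⟩, ?_⟩
  rintro _ ⟨j, rfl⟩
  refine Set.infinite_of_injective_forall_mem (f := Nat.pair j) ?_ fun m => ?_
  · intro m m' h
    exact (Nat.pair_eq_pair.mp h).2
  · simp [Nat.unpair_pair]

section Sequences

variable {α : Type*}

theorem exists_seq_succ_eq_count [DecidableEq α] (next : α → ℕ → α) (a₀ : α) :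
    ∃ x : ℕ → α, x 0 = a₀ ∧ ∀ n, x (n + 1) = next (x n) (Nat.count (fun m => x m = x n) n) := by
  let y : ℕ → α × (α → ℕ) := fun n => Nat.rec (a₀, fun _ => 0)
    (fun _ p => (next p.1 (p.2 p.1), Function.update p.2 p.1 (p.2 p.1 + 1))) n
  have hcount : ∀ n t, (y n).2 t = Nat.count (fun m => (y m).1 = t) n := by
    intro n t
    induction n with
    | zero => rfl
    | succ n ih =>
      rw [Nat.count_succ, ← ih]
      change Function.update (y n).2 (y n).1 ((y n).2 (y n).1 + 1) t = _
      by_cases h : (y n).1 = t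
      · subst h
        simp
      · simp [Function.update_of_ne (Ne.symm h), h]
  exact ⟨fun n => (y n).1, rfl, fun n => by rw [← hcount]⟩

theorem infinite_setOf_step_of_count [DecidableEq α] {next : α → ℕ → α} {x : ℕ → α}
    (hx : ∀ n, x (n + 1) = next (x n) (Nat.count (fun m => x m = x n) n)) {u v : α}
    (hu : {n | x n = u}.Infinite) (hv : {k | next u k = v}.Infinite) :
    {n | x n = u ∧ x (n + 1) = v}.Infinite := by
  refine (hv.image (Nat.nth_injective hu).injOn).mono ?_
  rintro _ ⟨k, hk, rfl⟩
  have hmem : x (Nat.nth (fun m => x m = u) k) = u := Nat.nth_mem_of_infinite hu k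
  refine ⟨hmem, ?_⟩
  rw [hx, hmem, Nat.count_nth_of_infinite hu]
  exact hk

theorem exists_infinite_setOf_step [Finite α] {x : ℕ → α} {u : α} (hu : {n | x n = u}.Infinite) :
    ∃ v, {n | x n = u ∧ x (n + 1) = v}.Infinite := by
  by_contra! h
  refine hu ((Set.finite_iUnion fun v => h v).subset fun n hn => ?_)
  exact Set.mem_iUnion.mpr ⟨x (n + 1), hn, rfl⟩

theorem infinite_setOf_eq_of_step {x : ℕ → α} {u v : α}
    (h : {n | x n = u ∧ x (n + 1) = v}.Infinite) : {n | x n = v}.Infinite :=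
  (h.image (add_left_injective 1).injOn).mono (by rintro _ ⟨n, hn, rfl⟩; exact hn.2)

theorem infinite_setOf_add_iff {p : ℕ → Prop} (n₀ : ℕ) :
    {m | p (m + n₀)}.Infinite ↔ {i | p i}.Infinite := by
  simp only [Set.infinite_iff_exists_gt]
  constructor
  · intro h a
    obtain ⟨m, hm, ham⟩ := h a
    exact ⟨m + n₀, hm, by omega⟩
  · intro h a
    obtain ⟨i, hi, hai⟩ := h (a + n₀)
    exact ⟨i - n₀, by rwa [Set.mem_ofPred_eq, Nat.sub_add_cancel (by omega)], by omega⟩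

end Sequences

namespace FondPaper

variable {S A : Type} {P : FOND S A} {π : S → Option A} {fair : A → Prop}

theorem Traj.hasStep_of_len_eq_none {τ : Traj S} (h : τ.len = none) (i : ℕ) : τ.HasStep i :=
  fun n hn => by simp [h] at hn

theorem IsTraj.reachedBy {τ : Traj S} (h : IsTraj P π τ) {i : ℕ} (hi : τ.Inside i) :
    ReachedBy P π (τ.states i) :=
  ⟨⟨τ.states, some i⟩, ⟨h.1, fun j hj => h.2 j fun m hm => (hj i rfl).trans_le (hi m hm)⟩,
    i, rfl, rfl⟩

theorem IsTraj.notMem_goal (hpol : IsPolicy P π) {τ : Traj S} (h : IsTraj P π τ) {i : ℕ}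
    (hi : τ.HasStep i) : τ.states i ∉ P.goal := fun hg => by
  obtain ⟨a, ha, -⟩ := h.2 i hi
  simp [hpol _ hg] at ha

theorem ReachedBy.step {s s' : S} (h : ReachedBy P π s) (hst : PStep P π s s') :
    ReachedBy P π s' := by
  obtain ⟨τ, ⟨h0, hstep⟩, n, hlen, rfl⟩ := h
  refine ⟨⟨fun i => if i ≤ n then τ.states i else s', some (n + 1)⟩,
    ⟨by simp [h0], fun i hi => ?_⟩, n + 1, rfl, by simp⟩
  rcases (Nat.lt_succ_iff.mp (hi _ rfl)).lt_or_eq with hin | rfl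
  · simpa [hin.le, Nat.succ_le_of_lt hin] using
      hstep i fun m hm => (Option.some.inj (hlen.symm.trans hm)) ▸ hin
  · simpa [PStep] using hst

theorem ReachedBy.exists_infinite_traj {x : ℕ → S} (hr : ReachedBy P π (x 0))
    (hx : ∀ n, PStep P π (x n) (x (n + 1))) :
    ∃ τ : Traj S, τ.len = none ∧ IsTraj P π τ ∧ ∃ n₀, ∀ m, τ.states (m + n₀) = x m := by
  obtain ⟨τ₀, ⟨h0, hstep⟩, n₀, hlen, hend⟩ := hr
  let y : ℕ → S := fun i => if i < n₀ then τ₀.states i else x (i - n₀)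
  have hy : ∀ m, y (m + n₀) = x m := fun m => by simp [y]
  have hprefix : ∀ i ≤ n₀, y i = τ₀.states i := by
    intro i hi
    rcases hi.lt_or_eq with hi | rfl
    · simp [y, hi]
    · simpa [hend] using hy 0
  refine ⟨⟨y, none⟩, rfl, ⟨(hprefix 0 n₀.zero_le).trans h0, fun i _ => ?_⟩, n₀, hy⟩
  change PStep P π (y i) (y (i + 1))
  rcases lt_or_ge i n₀ with hi | hi
  · rw [hprefix i hi.le, hprefix (i + 1) hi]
    exact hstep i fun m hm => (Option.some.inj (hlen.symm.trans hm)) ▸ hi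
  · obtain ⟨m, rfl⟩ := Nat.exists_eq_add_of_le' hi
    rw [hy, add_right_comm, hy]
    exact hx m

theorem fairOcc_singleton_iff {A₀ : Set A} {τ : Traj S} {s : S} :
    FairOcc {(A₀, ∅)} π τ s ↔ ∃ a, π s = some a ∧ a ∈ A₀ := by
  simp [FairOcc]

section Fintype

variable [Fintype S]

theorem SolvesDual.reachesGoal_of_len_eq_some (hd : SolvesDual P fair π) {τ : Traj S}
    (htraj : IsTraj P π τ) (hmax : MaximalTraj P π τ) {n : ℕ} (hlen : τ.len = some n) :
    ReachesGoal P τ := by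
  have hinside : τ.Inside n := fun m hm => (Option.some.inj (hlen.symm.trans hm)).le
  refine ⟨n, hinside, by_contra fun hg => ?_⟩
  obtain ⟨a, ha, happ⟩ := hd.1 _ (htraj.reachedBy hinside) hg
  rcases hmax with hnone | ⟨n', hlen', hend⟩
  · simp [hnone] at hlen
  obtain rfl : n = n' := Option.some.inj (hlen.symm.trans hlen')
  rcases hend with ⟨hgoal, -⟩ | hundef | ⟨a', ha', hinapp⟩
  · exact hg hgoal
  · simp [hundef] at ha
  · rw [ha, Option.some.injEq] at ha'
    exact hinapp (ha' ▸ happ)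

theorem SolvesDual.not_fairPlus_of_len_eq_none (hd : SolvesDual P fair π) {τ : Traj S}
    (htraj : IsTraj P π τ) (hlen : τ.len = none) :
    ¬ FairPlus P ({({a | fair a}, (∅ : Set A))} : Set (Set A × Set A)) π τ := by
  intro hfair
  obtain ⟨-, d, -, -, hdec⟩ := hd
  have hstep : ∀ n, PStep P π (τ.states n) (τ.states (n + 1)) :=
    fun n => htraj.2 n (Traj.hasStep_of_len_eq_none hlen n)
  have hrec : {t | {i | τ.states i = t}.Infinite}.Nonempty := by
    obtain ⟨t, ht⟩ := Finite.exists_infinite_fiber τ.states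
    exact ⟨t, Set.infinite_coe_iff.mp ht⟩
  obtain ⟨u, hu, hmin⟩ := Set.exists_min_image _ d (Set.toFinite _) hrec
  obtain ⟨i, rfl⟩ := hu.nonempty
  obtain ⟨a, ha, -⟩ := hstep i
  have hreach : ReachedBy P π (τ.states i) :=
    htraj.reachedBy fun n hn => by simp [hlen] at hn
  obtain ⟨v, hv, hlt⟩ : ∃ v, {n | τ.states n = τ.states i ∧ τ.states (n + 1) = v}.Infinite ∧
      d v < d (τ.states i) := by
    by_cases hfa : fair a
    · obtain ⟨v, hvF, hlt⟩ := (hdec _ a hreach ha).1 hfa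
      exact ⟨v, hfair _ ⟨hlen, hu⟩ (fairOcc_singleton_iff.mpr ⟨a, ha, hfa⟩) a ha v hvF, hlt⟩
    · obtain ⟨v, hv⟩ := exists_infinite_setOf_step hu
      obtain ⟨n, hnu, hnv⟩ := hv.nonempty
      obtain ⟨a', ha', hmem⟩ := hstep n
      rw [hnu, ha, Option.some.injEq] at ha'
      subst ha'
      rw [hnu, hnv] at hmem
      exact ⟨v, hv, (hdec _ a hreach ha).2 hfa v hmem⟩
  exact (hmin v (infinite_setOf_eq_of_step hv)).not_gt hlt

theorem SolvesDual.solvesPlus (hd : SolvesDual P fair π) :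
    SolvesPlus P ({({a | fair a}, (∅ : Set A))} : Set (Set A × Set A)) π := by
  intro τ htraj hmax hfair
  cases hlen : τ.len with
  | none => exact (hd.not_fairPlus_of_len_eq_none htraj hlen hfair).elim
  | some n => exact hd.reachesGoal_of_len_eq_some htraj hmax hlen

end Fintype

theorem SolvesPlus.exists_applicable {C : Set (Set A × Set A)} (hpol : IsPolicy P π)
    (hs : SolvesPlus P C π) {s : S} (hr : ReachedBy P π s) (hg : s ∉ P.goal) :
    ∃ a, π s = some a ∧ (P.F a s).Nonempty := by
  by_contra hno
  obtain ⟨τ, htraj, n, hlen, rfl⟩ := hr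
  have hmax : MaximalTraj P π τ := by
    refine Or.inr ⟨n, hlen, Or.inr ?_⟩
    cases hπs : π (τ.states n) with
    | none => exact Or.inl rfl
    | some a => exact Or.inr ⟨a, rfl, fun happ => hno ⟨a, hπs, happ⟩⟩
  have hfair : FairPlus P C π τ := fun t hrec => by simp [RecurrentIn, hlen] at hrec
  obtain ⟨i, hi, hgi⟩ := hs τ htraj hmax hfair
  rcases (hi n hlen).lt_or_eq with hlt | rfl
  · exact htraj.notMem_goal hpol (fun m hm => Option.some.inj (hlen.symm.trans hm) ▸ hlt) hgi
  · exact hg hgi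

theorem exists_fair_seq_of_notMem_dualClosed [Finite S] {T : Set S}
    (hT : DualClosed P fair π T)
    (happ : ∀ s, ReachedBy P π s → s ∉ P.goal → ∃ a, π s = some a ∧ (P.F a s).Nonempty)
    {s₀ : S} (hr : ReachedBy P π s₀) (hs₀ : s₀ ∉ T) :
    ∃ x : ℕ → S, x 0 = s₀ ∧ (∀ n, PStep P π (x n) (x (n + 1))) ∧
      ∀ u a, π u = some a → fair a → {n | x n = u}.Infinite →
        ∀ v ∈ P.F a u, {n | x n = u ∧ x (n + 1) = v}.Infinite := by
  classical
  obtain ⟨hgoal, hfairT, hadvT⟩ := hT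
  let G : S → Set S := fun u => {v | PStep P π u v ∧ v ∉ T}
  have hfairG : ∀ u a, u ∉ T → π u = some a → fair a → P.F a u ⊆ G u :=
    fun u a huT ha hfa v hv => ⟨⟨a, ha, hv⟩, fun hvT => huT (hfairT u a ha hfa ⟨v, hv, hvT⟩)⟩
  have hG : ∀ u, ReachedBy P π u → u ∉ T → (G u).Nonempty := by
    intro u hu huT
    obtain ⟨a, ha, hne⟩ := happ u hu (fun hg => huT (hgoal hg))
    by_cases hfa : fair a
    · exact hne.mono (hfairG u a huT ha hfa)
    · by_contra hempty
      refine huT (hadvT u a ha hfa hne fun v hv => ?_)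
      by_contra hvT
      exact hempty ⟨v, ⟨a, ha, hv⟩, hvT⟩
  have he : ∀ u, ∃ e : ℕ → S, ((G u).Nonempty → ∀ k, e k ∈ G u) ∧
      ∀ v ∈ G u, {k | e k = v}.Infinite := by
    intro u
    by_cases hne : (G u).Nonempty
    · obtain ⟨e, hmem, hinf⟩ := (Set.toFinite (G u)).countable.exists_seq_infinite_fibers hne
      exact ⟨e, fun _ => hmem, hinf⟩
    · exact ⟨fun _ => u, fun h => absurd h hne, fun v hv => absurd ⟨v, hv⟩ hne⟩
  choose e hemem heinf using he
  obtain ⟨x, hx0, hx⟩ := exists_seq_succ_eq_count e s₀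
  have hstep : ∀ n, ReachedBy P π (x n) → x n ∉ T → x (n + 1) ∈ G (x n) := fun n hr hT => by
    rw [hx n]
    exact hemem _ (hG _ hr hT) _
  have hinv : ∀ n, ReachedBy P π (x n) ∧ x n ∉ T := by
    intro n
    induction n with
    | zero => exact hx0 ▸ ⟨hr, hs₀⟩
    | succ n ih =>
      obtain ⟨hst, hT⟩ := hstep n ih.1 ih.2
      exact ⟨ih.1.step hst, hT⟩
  refine ⟨x, hx0, fun n => (hstep n (hinv n).1 (hinv n).2).1, fun u a ha hfa hu v hv => ?_⟩
  obtain ⟨n, rfl⟩ := hu.nonempty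
  exact infinite_setOf_step_of_count hx hu (heinf _ v (hfairG _ a (hinv n).2 ha hfa hv))

theorem SolvesPlus.dualTerm [Finite S] (hpol : IsPolicy P π)
    (hs : SolvesPlus P ({({a | fair a}, (∅ : Set A))} : Set (Set A × Set A)) π) {s : S}
    (hr : ReachedBy P π s) : DualTerm P fair π s := by
  intro T hT
  by_contra hsT
  obtain ⟨x, rfl, hxstep, hxfair⟩ :=
    exists_fair_seq_of_notMem_dualClosed hT (fun _ => hs.exists_applicable hpol) hr hsT
  obtain ⟨τ, hlen, htraj, n₀, hτx⟩ := hr.exists_infinite_traj hxstep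
  have hτx' : ∀ m, τ.states (m + n₀ + 1) = x (m + 1) := fun m => by
    rw [add_right_comm]
    exact hτx (m + 1)
  have hfair : FairPlus P ({({a | fair a}, (∅ : Set A))} : Set (Set A × Set A)) π τ := by
    intro u hu hocc a ha v hv
    obtain ⟨a', ha', hfa⟩ := fairOcc_singleton_iff.mp hocc
    rw [ha, Option.some.injEq] at ha'
    subst ha'
    have hxu : {m | x m = u}.Infinite := by
      simpa only [hτx] using (infinite_setOf_add_iff n₀).mpr hu.2
    rw [← infinite_setOf_add_iff n₀]
    simpa only [hτx', hτx] using hxfair u a ha hfa hxu v hv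
  obtain ⟨i, -, hgi⟩ := hs τ htraj (Or.inl hlen) hfair
  exact htraj.notMem_goal hpol (Traj.hasStep_of_len_eq_none hlen i) hgi

def dualPhi (P : FOND S A) (fair : A → Prop) (π : S → Option A) (T : Set S) : Set S :=
  P.goal ∪ {s | ∃ a, π s = some a ∧ fair a ∧ ∃ s' ∈ P.F a s, s' ∈ T} ∪
    {s | ∃ a, π s = some a ∧ ¬ fair a ∧ (P.F a s).Nonempty ∧ P.F a s ⊆ T}

theorem dualPhi_mono : Monotone (dualPhi P fair π) := by
  rintro T T' h s ((hg | ⟨a, ha, hfa, s', hs', hT⟩) | ⟨a, ha, hfa, hne, hsub⟩)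
  · exact Or.inl (Or.inl hg)
  · exact Or.inl (Or.inr ⟨a, ha, hfa, s', hs', h hT⟩)
  · exact Or.inr ⟨a, ha, hfa, hne, hsub.trans h⟩

def dualStage (P : FOND S A) (fair : A → Prop) (π : S → Option A) (n : ℕ) : Set S :=
  (dualPhi P fair π)^[n] ∅

theorem dualStage_succ (n : ℕ) :
    dualStage P fair π (n + 1) = dualPhi P fair π (dualStage P fair π n) :=
  Function.iterate_succ_apply' _ _ _

theorem monotone_dualStage : Monotone (dualStage P fair π) :=
  dualPhi_mono.monotone_iterate_of_le_map (Set.empty_subset _)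

theorem exists_dualClosed_dualStage [Finite S] :
    ∃ N, DualClosed P fair π (dualStage P fair π N) := by
  obtain ⟨N, hN⟩ := WellFoundedGT.monotone_chain_condition
    (⟨dualStage P fair π, monotone_dualStage⟩ : ℕ →o Set S)
  have hfix : dualPhi P fair π (dualStage P fair π N) ⊆ dualStage P fair π N := by
    rw [← dualStage_succ]
    exact (hN (N + 1) N.le_succ).ge
  exact ⟨N, fun s hs => hfix (Or.inl (Or.inl hs)),
    fun s a ha hfa hex => hfix (Or.inl (Or.inr ⟨a, ha, hfa, hex⟩)),
    fun s a ha hfa hne hsub => hfix (Or.inr ⟨a, ha, hfa, hne, hsub⟩)⟩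

/-- `dualStage (dualRank s)` is the last stage not containing `s` (junk value `0` if `s` never
enters a stage). -/
noncomputable def dualRank (P : FOND S A) (fair : A → Prop) (π : S → Option A) (s : S) : ℕ :=
  sInf {n | s ∈ dualStage P fair π (n + 1)}

theorem mem_dualStage_dualRank_succ {s : S} {n : ℕ} (hs : s ∈ dualStage P fair π n) :
    s ∈ dualStage P fair π (dualRank P fair π s + 1) := by
  cases n with
  | zero => exact absurd hs (Set.notMem_empty s)
  | succ n => exact Nat.sInf_mem (s := {n | s ∈ dualStage P fair π (n + 1)}) ⟨n, hs⟩

theorem ncard_dualStage_dualRank_lt [Finite S] {s : S} {n : ℕ} (hs : s ∈ dualStage P fair π n) :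
    (dualStage P fair π (dualRank P fair π s)).ncard < (dualStage P fair π n).ncard := by
  cases n with
  | zero => exact absurd hs (Set.notMem_empty s)
  | succ n =>
    have hle : dualRank P fair π s ≤ n := Nat.sInf_le hs
    have hnot : s ∉ dualStage P fair π (dualRank P fair π s) := by
      rcases hr : dualRank P fair π s with _ | r
      · exact Set.notMem_empty s
      · exact Nat.notMem_of_lt_sInf (by omega : r < dualRank P fair π s)
    exact Set.ncard_lt_ncard
      ⟨monotone_dualStage (hle.trans n.le_succ), fun hsub => hnot (hsub hs)⟩

theorem SolvesPlus.solvesDual [Fintype S] (hpol : IsPolicy P π)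
    (hs : SolvesPlus P ({({a | fair a}, (∅ : Set A))} : Set (Set A × Set A)) π) :
    SolvesDual P fair π := by
  obtain ⟨N, hN⟩ := exists_dualClosed_dualStage (P := P) (fair := fair) (π := π)
  refine ⟨fun _ => hs.exists_applicable hpol,
    fun s => (dualStage P fair π (dualRank P fair π s)).ncard,
    fun s _ => (Set.ncard_le_card _).trans_eq Nat.card_eq_fintype_card, fun s _ hg => ?_,
    fun s a hr ha => ?_⟩
  · have h1 : s ∈ dualStage P fair π 1 := by
      rw [dualStage_succ]
      exact Or.inl (Or.inl hg)
    have hrank : dualRank P fair π s = 0 := Nat.eq_zero_of_le_zero (Nat.sInf_le h1)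
    change (dualStage P fair π (dualRank P fair π s)).ncard = 0
    rw [hrank]
    exact Set.ncard_empty S
  · have hdec : ∀ s' ∈ dualStage P fair π (dualRank P fair π s),
        (dualStage P fair π (dualRank P fair π s')).ncard <
          (dualStage P fair π (dualRank P fair π s)).ncard :=
      fun s' hs' => ncard_dualStage_dualRank_lt hs'
    have hmem := mem_dualStage_dualRank_succ (hs.dualTerm hpol hr _ hN)
    rw [dualStage_succ] at hmem
    rcases hmem with (hg | ⟨a', ha', hfa, s', hs'F, hs'T⟩) | ⟨a', ha', hfa, -, hsub⟩
    · simp [hpol s hg] at ha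
    · rw [ha, Option.some.injEq] at ha'
      subst ha'
      exact ⟨fun _ => ⟨s', hs'F, hdec s' hs'T⟩, fun h => absurd hfa h⟩
    · rw [ha, Option.some.injEq] at ha'
      subst ha'
      exact ⟨fun h => absurd h hfa, fun _ s' hs' => hdec s' (hsub hs')⟩

end FondPaper

open FondPaper

theorem stmt11_general (S A : Type) [Fintype S] (P : FOND S A)
    (π : S → Option A) (hπ : IsPolicy P π) (fair : A → Prop) :
    SolvesDual P fair π ↔
      SolvesPlus P ({({a | fair a}, (∅ : Set A))} : Set (Set A × Set A)) π :=
  ⟨SolvesDual.solvesPlus, SolvesPlus.solvesDual hπ⟩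

/-- π solves the Dual FOND problem P' (a FOND problem P with actions
labeled fair/adversarial) iff π solves the FOND+ problem ⟨P, {A/∅}⟩ where A is the
set of actions labeled fair. -/
theorem stmt11 (S A : Type) [Fintype S] [Finite A] (P : FOND S A) (hgoal : P.goal.Nonempty)
    (π : S → Option A) (hπ : IsPolicy P π) (fair : A → Prop) :
    SolvesDual P fair π ↔
      SolvesPlus P ({({a | fair a}, (∅ : Set A))} : Set (Set A × Set A)) π :=
  stmt11_general S A P π hπ fair
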